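/- arXiv:math/0401355 — 2 statements merged into one kernel-verified Lean document; each statement's English description precedes it below -/
import Mathlib

section
/- Let n be a positive integer, let α_j ∈ [0,1) and a_j ≥ 0 for 1 ≤ j ≤ n, and let y ≥ 0 satisfy y ≤ Σ_{j=1}^n a_j y^{α_j}. Then y ≤ C Σ_{j=1}^n a_j^{1/(1-α_j)}, where C = max_{1 ≤ j ≤ n} n^{1/(1-α_j)}. -/
/-! Some term of the sum carries at least a `1/n` share of it, so `y ≤ n aⱼ y^{αⱼ}` for one `j`;
dividing by `y^{αⱼ}` gives `y^{1-αⱼ} ≤ n aⱼ`, i.e. `y ≤ (n aⱼ)^{1/(1-αⱼ)}`, and this single term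
is bounded by `C ∑ₖ aₖ^{1/(1-αₖ)}`. -/

open Finset

theorem Finset.exists_le_card_mul_of_le_sum {ι R : Type*} [Fintype ι] [Nonempty ι]
    [Semiring R] [LinearOrder R] [IsOrderedRing R] {f : ι → R} {y : R} (h : y ≤ ∑ j, f j) :
    ∃ j, y ≤ Fintype.card ι * f j := by
  obtain ⟨j, -, hj⟩ := univ.exists_max_image f univ_nonempty
  refine ⟨j, h.trans ?_⟩
  simpa [nsmul_eq_mul] using sum_le_card_nsmul univ f (f j) fun i _ => hj i (mem_univ i)

theorem Real.le_rpow_one_div_one_sub_of_le_mul_rpow {y c α : ℝ} (hy : 0 ≤ y) (hc : 0 ≤ c)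
    (hα : α < 1) (h : y ≤ c * y ^ α) : y ≤ c ^ (1 / (1 - α)) := by
  rcases hy.eq_or_lt with rfl | hy
  · positivity
  have hα' : 0 < 1 - α := sub_pos.mpr hα
  rw [one_div, Real.le_rpow_inv_iff_of_pos hy.le hc hα', Real.rpow_sub hy, Real.rpow_one,
    div_le_iff₀ (Real.rpow_pos_of_pos hy α)]
  exact h

theorem stmt_0_general (n : ℕ) (hn : 0 < n) (α a : Fin n → ℝ)
    (hα1 : ∀ j, α j < 1) (ha : ∀ j, 0 ≤ a j)
    (y : ℝ) (hy : 0 ≤ y)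
    (h : y ≤ ∑ j, a j * y ^ α j) :
    y ≤ (Finset.univ.sup' ⟨⟨0, hn⟩, Finset.mem_univ _⟩
          (fun j => (n : ℝ) ^ (1 / (1 - α j)))) *
        ∑ j, a j ^ (1 / (1 - α j)) := by
  have : Nonempty (Fin n) := ⟨⟨0, hn⟩⟩
  obtain ⟨j, hj⟩ := exists_le_card_mul_of_le_sum h
  rw [Fintype.card_fin, ← mul_assoc] at hj
  have hC : (n : ℝ) ^ (1 / (1 - α j)) ≤
      univ.sup' ⟨⟨0, hn⟩, mem_univ _⟩ fun k => (n : ℝ) ^ (1 / (1 - α k)) :=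
    le_sup' (fun k => (n : ℝ) ^ (1 / (1 - α k))) (mem_univ j)
  calc y ≤ (n * a j) ^ (1 / (1 - α j)) :=
        Real.le_rpow_one_div_one_sub_of_le_mul_rpow hy (mul_nonneg n.cast_nonneg (ha j)) (hα1 j) hj
    _ = (n : ℝ) ^ (1 / (1 - α j)) * a j ^ (1 / (1 - α j)) := Real.mul_rpow n.cast_nonneg (ha j)
    _ ≤ _ := mul_le_mul hC
        (single_le_sum (f := fun k => a k ^ (1 / (1 - α k)))
          (fun k _ => Real.rpow_nonneg (ha k) _) (mem_univ j))
        (Real.rpow_nonneg (ha j) _) ((by positivity : (0 : ℝ) ≤ _).trans hC)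

/-- Lemma 2.2: if `0 ≤ αⱼ < 1`, `aⱼ ≥ 0` and `y ≥ 0` satisfies
`y ≤ ∑ⱼ aⱼ y^{αⱼ}`, then `y ≤ C ∑ⱼ aⱼ^{1/(1-αⱼ)}` with
`C = maxⱼ n^{1/(1-αⱼ)}`. -/
theorem stmt_0 (n : ℕ) (hn : 0 < n) (α a : Fin n → ℝ)
    (hα0 : ∀ j, 0 ≤ α j) (hα1 : ∀ j, α j < 1) (ha : ∀ j, 0 ≤ a j)
    (y : ℝ) (hy : 0 ≤ y)
    (h : y ≤ ∑ j, a j * y ^ α j) :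
    y ≤ (Finset.univ.sup' ⟨⟨0, hn⟩, Finset.mem_univ _⟩
          (fun j => (n : ℝ) ^ (1 / (1 - α j)))) *
        ∑ j, a j ^ (1 / (1 - α j)) :=
  stmt_0_general n hn α a hα1 ha y hy h
end

section
/- Let 0 ≤ α_j < α_1 < 1 for 2 ≤ j ≤ n, let I be an interval, let a_j : I → [0,∞) be continuous for 0 ≤ j ≤ n, and let y : I → [0,∞) be absolutely continuous with |y'(t)| ≤ a_0(t) y(t) + Σ_{j=1}^n a_j(t) y(t)^{α_j} for all t ∈ I. Let t_0 ∈ I, y(t_0) = y_0, and set A_0(t) = |∫_{t_0}^t a_0(t') dt'| and A_j(t) = (1-α_j)|∫_{t_0}^t a_j(t') dt'| for 1 ≤ j ≤ n. Then for all t ∈ I, y(t) ≤ exp(A_0(t)) · { y_0^{1-α_1} + Σ_{j=1}^n A_j(t)^{(1-α_1)/(1-α_j)} }^{1/(1-α_1)}. -/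
open intervalIntegral Set Topology

/-!
Dividing by `exp (∫ a₀)` removes the linear term: since `α j ≤ 1`, the function
`w = exp (-∫ a₀) * y` satisfies `w' ≤ ∑ j, a j * w ^ α j`. Put `A j = (1 - α j) * ∫ a j`,
`p = 1 / (1 - α₁)` and `q j = (1 - α₁) / (1 - α j) ≤ 1`. Then
`(w t₀ ^ (1 - α₁) + ∑ j, A j ^ q j) ^ p` is a supersolution of this inequality, because
`u ^ q ≤ B` forces `B ^ (p * α) ≤ B ^ (p - 1) * u ^ (q - 1)`.
Perturbing it by `ε` makes it a strict supersolution, so the fencing theorem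
`image_le_of_deriv_right_lt_deriv_boundary'` bounds `w` by it, and `ε → 0` gives the claim for
`t ≥ t₀`. Times `t ≤ t₀` follow by reflecting `t ↦ -t`, which turns the bound on `-y'` into one on
the derivative of `s ↦ y (-s)`.
-/

theorem Real.rpow_one_sub_le_rpow_inv_sub_one {u B q : ℝ} (hu : 0 ≤ u) (hq : 0 < q)
    (hq₁ : q ≤ 1) (h : u ^ q ≤ B) : u ^ (1 - q) ≤ B ^ (q⁻¹ - 1) := by
  have hB : 0 ≤ B := (Real.rpow_nonneg hu q).trans h
  calc u ^ (1 - q) = ((u ^ q) ^ q⁻¹) ^ (1 - q) := by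
        rw [← Real.rpow_mul hu, mul_inv_cancel₀ hq.ne', Real.rpow_one]
    _ ≤ (B ^ q⁻¹) ^ (1 - q) := by gcongr
    _ = B ^ (q⁻¹ - 1) := by rw [← Real.rpow_mul hB]; congr 1; field_simp

theorem Real.rpow_rpow_le_rpow_sub_one_mul_rpow {B u α α₁ : ℝ} (hB : 0 < B) (hu : 0 < u)
    (hα : α ≤ α₁) (hα₁ : α₁ < 1) (h : u ^ ((1 - α₁) / (1 - α)) ≤ B) :
    (B ^ (1 / (1 - α₁))) ^ α ≤ B ^ (1 / (1 - α₁) - 1) * u ^ ((1 - α₁) / (1 - α) - 1) := by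
  set q := (1 - α₁) / (1 - α)
  have hq : 0 < q := div_pos (by linarith) (by linarith)
  have hq₁ : q ≤ 1 := (div_le_one (by linarith)).2 (by linarith)
  have hexp : 1 / (1 - α₁) - 1 = 1 / (1 - α₁) * α + (q⁻¹ - 1) := by
    simp only [q, inv_div]; field_simp; ring
  have hcancel : u ^ (1 - q) * u ^ (q - 1) = 1 := by
    rw [← Real.rpow_add hu]; simp
  calc (B ^ (1 / (1 - α₁))) ^ α = B ^ (1 / (1 - α₁) * α) * (u ^ (1 - q) * u ^ (q - 1)) := by
        rw [hcancel, mul_one, Real.rpow_mul hB.le]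
    _ ≤ B ^ (1 / (1 - α₁) * α) * (B ^ (q⁻¹ - 1) * u ^ (q - 1)) := by
        gcongr
        exact Real.rpow_one_sub_le_rpow_inv_sub_one hu.le hq hq₁ h
    _ = B ^ (1 / (1 - α₁) - 1) * u ^ (q - 1) := by rw [hexp, Real.rpow_add hB]; ring

theorem Real.mul_rpow_le_mul_rpow_of_le_one {c y α : ℝ} (hc₀ : 0 < c) (hc₁ : c ≤ 1) (hy : 0 ≤ y)
    (hα : α ≤ 1) : c * y ^ α ≤ (c * y) ^ α := by
  rw [Real.mul_rpow hc₀.le hy]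
  gcongr
  simpa using Real.rpow_le_rpow_of_exponent_ge hc₀ hc₁ hα

theorem ContinuousOn.continuousOn_integral_Icc {f : ℝ → ℝ} {a b : ℝ}
    (hf : ContinuousOn f (Icc a b)) (hab : a ≤ b) :
    ContinuousOn (fun u => ∫ s in a..u, f s) (Icc a b) := by
  simpa only [uIcc_of_le hab] using
    continuousOn_primitive_interval' (hf.intervalIntegrable_of_Icc hab) (left_mem_uIcc)

theorem ContinuousOn.hasDerivWithinAt_integral_Ici {f : ℝ → ℝ} {a b x : ℝ}
    (hf : ContinuousOn f (Icc a b)) (hx : x ∈ Ico a b) :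
    HasDerivWithinAt (fun u => ∫ s in a..u, f s) (f x) (Ici x) x := by
  have hmem : Icc a b ∈ 𝓝[>] x := Icc_mem_nhdsGT_of_mem hx
  exact integral_hasDerivWithinAt_right
    ((hf.mono (Icc_subset_Icc_right hx.2.le)).intervalIntegrable_of_Icc hx.1)
    ((hf.stronglyMeasurableAtFilter_nhdsWithin measurableSet_Icc x).filter_mono
      (nhdsWithin_le_of_mem hmem))
    ((hf x (Ico_subset_Icc_self hx)).mono_of_mem_nhdsWithin hmem)

namespace NonlinearGronwall

variable {ι : Type*} [Fintype ι] {α : ι → ℝ} {α₁ : ℝ} {A a : ι → ℝ → ℝ} {t₀ y₀ ε : ℝ}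

/-- The `ε`-perturbation of `y₀ ^ (1 - α₁) + ∑ j, A j t ^ ((1 - α₁) / (1 - α j))`; the term
`ε * (t - t₀)` supplies the strict margin the fencing theorem needs. -/
noncomputable def perturbedBound (α : ι → ℝ) (α₁ : ℝ) (A : ι → ℝ → ℝ) (t₀ y₀ ε t : ℝ) : ℝ :=
  (y₀ + ε) ^ (1 - α₁) + ε * (t - t₀) + ∑ j, (A j t + ε) ^ ((1 - α₁) / (1 - α j))

theorem rpow_le_perturbedBound {t : ℝ} (ht : t₀ ≤ t) (hA : ∀ j, 0 ≤ A j t) (hy₀ : 0 ≤ y₀)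
    (hε : 0 < ε) (j : ι) :
    (A j t + ε) ^ ((1 - α₁) / (1 - α j)) ≤ perturbedBound α α₁ A t₀ y₀ ε t := by
  have hrest : 0 ≤ (y₀ + ε) ^ (1 - α₁) + ε * (t - t₀) :=
    add_nonneg (Real.rpow_nonneg (by linarith) _) (mul_nonneg hε.le (by linarith))
  have hsum := Finset.single_le_sum (f := fun j => (A j t + ε) ^ ((1 - α₁) / (1 - α j)))
    (fun i _ => Real.rpow_nonneg (by linarith [hA i]) _) (Finset.mem_univ j)
  unfold perturbedBound
  linarith

theorem perturbedBound_pos {t : ℝ} (ht : t₀ ≤ t) (hA : ∀ j, 0 ≤ A j t) (hy₀ : 0 ≤ y₀)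
    (hε : 0 < ε) : 0 < perturbedBound α α₁ A t₀ y₀ ε t := by
  have hsum : 0 ≤ ∑ j, (A j t + ε) ^ ((1 - α₁) / (1 - α j)) :=
    Finset.sum_nonneg fun i _ => Real.rpow_nonneg (by linarith [hA i]) _
  have : 0 < (y₀ + ε) ^ (1 - α₁) := Real.rpow_pos_of_pos (by linarith) _
  unfold perturbedBound
  nlinarith

theorem hasDerivWithinAt_rpow_perturbedBound (hα : ∀ j, α j ≤ α₁) (hα₁ : α₁ < 1)
    {x : ℝ} (hx : t₀ ≤ x) (hA : ∀ j, 0 ≤ A j x)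
    (hA' : ∀ j, HasDerivWithinAt (A j) ((1 - α j) * a j x) (Ici x) x) (hy₀ : 0 ≤ y₀)
    (hε : 0 < ε) :
    HasDerivWithinAt (fun t => perturbedBound α α₁ A t₀ y₀ ε t ^ (1 / (1 - α₁)))
      (perturbedBound α α₁ A t₀ y₀ ε x ^ (1 / (1 - α₁) - 1) *
        (ε / (1 - α₁) + ∑ j, a j x * (A j x + ε) ^ ((1 - α₁) / (1 - α j) - 1))) (Ici x) x := by
  have hB : HasDerivWithinAt (perturbedBound α α₁ A t₀ y₀ ε)
      (ε + ∑ j, (1 - α j) * a j x * ((1 - α₁) / (1 - α j)) *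
        (A j x + ε) ^ ((1 - α₁) / (1 - α j) - 1)) (Ici x) x := by
    have hsum := HasDerivWithinAt.fun_sum (u := Finset.univ) fun j _ =>
      ((hA' j).add_const ε).rpow_const (p := (1 - α₁) / (1 - α j))
        (Or.inl (by linarith [hA j]))
    have hlin : HasDerivWithinAt (fun t => (y₀ + ε) ^ (1 - α₁) + ε * (t - t₀)) ε (Ici x) x := by
      simpa using (((hasDerivWithinAt_id x (Ici x)).sub_const t₀).const_mul ε).const_add
        ((y₀ + ε) ^ (1 - α₁))
    exact hlin.fun_add hsum
  convert hB.rpow_const (p := 1 / (1 - α₁))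
    (Or.inl (perturbedBound_pos hx hA hy₀ hε).ne') using 1
  have h₁ : 1 - α₁ ≠ 0 := by linarith
  simp only [mul_add, add_mul, Finset.mul_sum, Finset.sum_mul]
  congr 1
  · field_simp
  · refine Finset.sum_congr rfl fun j _ => ?_
    have hj : 1 - α j ≠ 0 := by linarith [hα j]
    field_simp

theorem sum_lt_deriv_rpow_perturbedBound (hα : ∀ j, α j ≤ α₁) (hα₁ : α₁ < 1) {x : ℝ}
    (hx : t₀ ≤ x) (hA : ∀ j, 0 ≤ A j x) (ha : ∀ j, 0 ≤ a j x) (hy₀ : 0 ≤ y₀) (hε : 0 < ε) :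
    ∑ j, a j x * (perturbedBound α α₁ A t₀ y₀ ε x ^ (1 / (1 - α₁))) ^ α j <
      perturbedBound α α₁ A t₀ y₀ ε x ^ (1 / (1 - α₁) - 1) *
        (ε / (1 - α₁) + ∑ j, a j x * (A j x + ε) ^ ((1 - α₁) / (1 - α j) - 1)) := by
  set B := perturbedBound α α₁ A t₀ y₀ ε x
  have hB : 0 < B := perturbedBound_pos hx hA hy₀ hε
  have hmargin : 0 < B ^ (1 / (1 - α₁) - 1) * (ε / (1 - α₁)) :=
    mul_pos (Real.rpow_pos_of_pos hB _) (div_pos hε (by linarith))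
  have hterm : ∀ j, a j x * (B ^ (1 / (1 - α₁))) ^ α j ≤
      B ^ (1 / (1 - α₁) - 1) * (a j x * (A j x + ε) ^ ((1 - α₁) / (1 - α j) - 1)) := fun j => by
    rw [mul_left_comm]
    exact mul_le_mul_of_nonneg_left (Real.rpow_rpow_le_rpow_sub_one_mul_rpow hB
      (by linarith [hA j]) (hα j) hα₁ (rpow_le_perturbedBound hx hA hy₀ hε j)) (ha j)
  rw [mul_add, Finset.mul_sum]
  linarith [Finset.sum_le_sum fun j (_ : j ∈ Finset.univ) => hterm j]

theorem le_rpow_perturbedBound (hα : ∀ j, α j ≤ α₁) (hα₁ : α₁ < 1) {T : ℝ} (hT : t₀ ≤ T)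
    (hAc : ∀ j, ContinuousOn (A j) (Icc t₀ T))
    (hA' : ∀ j, ∀ t ∈ Ico t₀ T, HasDerivWithinAt (A j) ((1 - α j) * a j t) (Ici t) t)
    (hA : ∀ j, ∀ t ∈ Icc t₀ T, 0 ≤ A j t) (ha : ∀ j, ∀ t ∈ Ico t₀ T, 0 ≤ a j t)
    {w w' : ℝ → ℝ} (hw : ContinuousOn w (Icc t₀ T))
    (hw' : ∀ t ∈ Ico t₀ T, HasDerivWithinAt w (w' t) (Ici t) t) (hw₀ : 0 ≤ w t₀)
    (hbound : ∀ t ∈ Ico t₀ T, w' t ≤ ∑ j, a j t * w t ^ α j) (hε : 0 < ε) :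
    w T ≤ perturbedBound α α₁ A t₀ (w t₀) ε T ^ (1 / (1 - α₁)) := by
  have he : 0 < 1 - α₁ := by linarith
  have hq : ∀ j, 0 ≤ (1 - α₁) / (1 - α j) := fun j =>
    div_nonneg (by linarith) (by linarith [hα j])
  have hBc : ContinuousOn (fun t => perturbedBound α α₁ A t₀ (w t₀) ε t ^ (1 / (1 - α₁)))
      (Icc t₀ T) := by
    refine ContinuousOn.rpow_const ?_ fun _ _ => Or.inr ((one_div_pos.2 he).le)
    exact (continuousOn_const.add (by fun_prop)).add (continuousOn_finsetSum _ fun j _ =>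
      ((hAc j).add continuousOn_const).rpow_const fun _ _ => Or.inr (hq j))
  have hinit : w t₀ ≤ perturbedBound α α₁ A t₀ (w t₀) ε t₀ ^ (1 / (1 - α₁)) := by
    have hw₀ε : 0 < w t₀ + ε := by linarith
    have hsum : 0 ≤ ∑ j, (A j t₀ + ε) ^ ((1 - α₁) / (1 - α j)) :=
      Finset.sum_nonneg fun j _ => Real.rpow_nonneg (by linarith [hA j t₀ (left_mem_Icc.2 hT)]) _
    calc w t₀ ≤ ((w t₀ + ε) ^ (1 - α₁)) ^ (1 / (1 - α₁)) := by
          rw [← Real.rpow_mul hw₀ε.le, mul_one_div_cancel he.ne', Real.rpow_one]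
          linarith
      _ ≤ perturbedBound α α₁ A t₀ (w t₀) ε t₀ ^ (1 / (1 - α₁)) := by
          gcongr
          unfold perturbedBound
          simp only [sub_self, mul_zero, add_zero]
          linarith
  refine image_le_of_deriv_right_lt_deriv_boundary' hw hw' hinit hBc
    (fun x hx => hasDerivWithinAt_rpow_perturbedBound hα hα₁ hx.1
      (fun j => hA j x (Ico_subset_Icc_self hx)) (fun j => hA' j x hx) hw₀ hε)
    (fun x hx hwx => (hbound x hx).trans_lt ?_) (right_mem_Icc.2 hT)
  rw [hwx]
  exact sum_lt_deriv_rpow_perturbedBound hα hα₁ hx.1 (fun j => hA j x (Ico_subset_Icc_self hx))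
    (fun j => ha j x hx) hw₀ hε

theorem le_of_hasDerivWithinAt_le_sum_rpow (hα : ∀ j, α j ≤ α₁) (hα₁ : α₁ < 1) {T : ℝ}
    (hT : t₀ ≤ T) (hAc : ∀ j, ContinuousOn (A j) (Icc t₀ T))
    (hA' : ∀ j, ∀ t ∈ Ico t₀ T, HasDerivWithinAt (A j) ((1 - α j) * a j t) (Ici t) t)
    (hA : ∀ j, ∀ t ∈ Icc t₀ T, 0 ≤ A j t) (ha : ∀ j, ∀ t ∈ Ico t₀ T, 0 ≤ a j t)
    {w w' : ℝ → ℝ} (hw : ContinuousOn w (Icc t₀ T))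
    (hw' : ∀ t ∈ Ico t₀ T, HasDerivWithinAt w (w' t) (Ici t) t) (hw₀ : 0 ≤ w t₀)
    (hbound : ∀ t ∈ Ico t₀ T, w' t ≤ ∑ j, a j t * w t ^ α j) :
    w T ≤ (w t₀ ^ (1 - α₁) + ∑ j, A j T ^ ((1 - α₁) / (1 - α j))) ^ (1 / (1 - α₁)) := by
  have he : 0 < 1 - α₁ := by linarith
  have hq : ∀ j, 0 ≤ (1 - α₁) / (1 - α j) := fun j =>
    div_nonneg he.le (by linarith [hα j])
  have hcont : Continuous fun ε => perturbedBound α α₁ A t₀ (w t₀) ε T ^ (1 / (1 - α₁)) := by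
    unfold perturbedBound
    refine .rpow_const ?_ fun _ => Or.inr (one_div_pos.2 he).le
    exact ((continuous_const.add continuous_id).rpow_const fun _ => Or.inr he.le).add
      (by fun_prop) |>.add (continuous_finsetSum _ fun j _ =>
        (continuous_const.add continuous_id).rpow_const fun _ => Or.inr (hq j))
  have hlim := (hcont.tendsto 0).mono_left (nhdsWithin_le_nhds (s := Ioi 0))
  simp only [perturbedBound, add_zero, zero_mul] at hlim
  exact ge_of_tendsto hlim (eventually_nhdsWithin_of_forall fun ε hε =>
    le_rpow_perturbedBound hα hα₁ hT hAc hA' hA ha hw hw' hw₀ hbound hε)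

theorem exp_neg_mul_sub_le_sum_mul_rpow {c : ι → ℝ} {A₀ c₀ x x' : ℝ} (hα : ∀ j, α j ≤ 1)
    (hA₀ : 0 ≤ A₀) (hc : ∀ j, 0 ≤ c j) (hx : 0 ≤ x) (h : x' ≤ c₀ * x + ∑ j, c j * x ^ α j) :
    Real.exp (-A₀) * (x' - c₀ * x) ≤ ∑ j, c j * (Real.exp (-A₀) * x) ^ α j := by
  have hexp : Real.exp (-A₀) ≤ 1 := Real.exp_le_one_iff.2 (by linarith)
  calc Real.exp (-A₀) * (x' - c₀ * x)
      ≤ Real.exp (-A₀) * ∑ j, c j * x ^ α j := by gcongr; linarith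
    _ = ∑ j, c j * (Real.exp (-A₀) * x ^ α j) := by
        rw [Finset.mul_sum]
        exact Finset.sum_congr rfl fun j _ => by ring
    _ ≤ ∑ j, c j * (Real.exp (-A₀) * x) ^ α j := by
        gcongr with j
        · exact hc j
        · exact Real.mul_rpow_le_mul_rpow_of_le_one (Real.exp_pos _) hexp hx (hα j)

theorem le_exp_mul_of_hasDerivWithinAt_le (hα : ∀ j, α j ≤ α₁) (hα₁ : α₁ < 1) {T : ℝ}
    (hT : t₀ ≤ T) {a₀ : ℝ → ℝ} (ha₀c : ContinuousOn a₀ (Icc t₀ T))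
    (ha₀ : ∀ t ∈ Icc t₀ T, 0 ≤ a₀ t) (hac : ∀ j, ContinuousOn (a j) (Icc t₀ T))
    (ha : ∀ j, ∀ t ∈ Icc t₀ T, 0 ≤ a j t) {y y' : ℝ → ℝ} (hy : ContinuousOn y (Icc t₀ T))
    (hy' : ∀ t ∈ Ico t₀ T, HasDerivWithinAt y (y' t) (Ici t) t) (hynn : ∀ t ∈ Icc t₀ T, 0 ≤ y t)
    (hbound : ∀ t ∈ Ico t₀ T, y' t ≤ a₀ t * y t + ∑ j, a j t * y t ^ α j) :
    y T ≤ Real.exp (∫ s in t₀..T, a₀ s) *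
      (y t₀ ^ (1 - α₁) + ∑ j, ((1 - α j) * ∫ s in t₀..T, a j s) ^ ((1 - α₁) / (1 - α j))) ^
        (1 / (1 - α₁)) := by
  set A₀ : ℝ → ℝ := fun t => ∫ s in t₀..t, a₀ s
  have hA₀ : ∀ t ∈ Icc t₀ T, 0 ≤ A₀ t := fun t ht =>
    integral_nonneg ht.1 fun s hs => ha₀ s ⟨hs.1, hs.2.trans ht.2⟩
  have hA₀' : ∀ t ∈ Ico t₀ T, HasDerivWithinAt A₀ (a₀ t) (Ici t) t := fun t ht =>
    ha₀c.hasDerivWithinAt_integral_Ici ht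
  have hw' : ∀ t ∈ Ico t₀ T, HasDerivWithinAt (fun t => Real.exp (-A₀ t) * y t)
      (Real.exp (-A₀ t) * (y' t - a₀ t * y t)) (Ici t) t := fun t ht =>
    ((hA₀' t ht).fun_neg.exp.mul (hy' t ht)).congr_deriv (by ring)
  have hwbound : ∀ t ∈ Ico t₀ T, Real.exp (-A₀ t) * (y' t - a₀ t * y t) ≤
      ∑ j, a j t * (Real.exp (-A₀ t) * y t) ^ α j := fun t ht =>
    exp_neg_mul_sub_le_sum_mul_rpow (fun j => (hα j).trans hα₁.le) (hA₀ t (Ico_subset_Icc_self ht))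
      (fun j => ha j t (Ico_subset_Icc_self ht)) (hynn t (Ico_subset_Icc_self ht)) (hbound t ht)
  have key := le_of_hasDerivWithinAt_le_sum_rpow (w := fun t => Real.exp (-A₀ t) * y t)
    (A := fun j t => (1 - α j) * ∫ s in t₀..t, a j s) hα hα₁ hT
    (fun j => continuousOn_const.mul ((hac j).continuousOn_integral_Icc hT))
    (fun j t ht => ((hac j).hasDerivWithinAt_integral_Ici ht).const_mul (1 - α j))
    (fun j t ht => mul_nonneg (by linarith [hα j])
      (integral_nonneg ht.1 fun s hs => ha j s ⟨hs.1, hs.2.trans ht.2⟩))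
    (fun j t ht => ha j t (Ico_subset_Icc_self ht))
    (((ha₀c.continuousOn_integral_Icc hT).neg.rexp).mul hy) hw'
    (mul_nonneg (Real.exp_pos _).le (hynn t₀ (left_mem_Icc.2 hT))) hwbound
  simp only [A₀, integral_same, neg_zero, Real.exp_zero, one_mul] at key
  calc y T = Real.exp (A₀ T) * (Real.exp (-A₀ T) * y T) := by
        rw [← mul_assoc, ← Real.exp_add, add_neg_cancel, Real.exp_zero, one_mul]
    _ ≤ _ := by gcongr

theorem le_of_hasDerivAt_le (hα : ∀ j, α j ≤ α₁) (hα₁ : α₁ < 1) {I : Set ℝ}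
    (hI : I.OrdConnected) {a₀ : ℝ → ℝ} (ha₀c : ContinuousOn a₀ I) (ha₀ : ∀ t ∈ I, 0 ≤ a₀ t)
    (hac : ∀ j, ContinuousOn (a j) I) (ha : ∀ j, ∀ t ∈ I, 0 ≤ a j t) {y y' : ℝ → ℝ}
    (hy : ∀ t ∈ I, HasDerivAt y (y' t) t) (hynn : ∀ t ∈ I, 0 ≤ y t)
    (hbound : ∀ t ∈ I, y' t ≤ a₀ t * y t + ∑ j, a j t * y t ^ α j)
    (ht₀ : t₀ ∈ I) {t : ℝ} (ht : t ∈ I) (hle : t₀ ≤ t) :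
    y t ≤ Real.exp |∫ s in t₀..t, a₀ s| *
      (y t₀ ^ (1 - α₁) + ∑ j, ((1 - α j) * |∫ s in t₀..t, a j s|) ^ ((1 - α₁) / (1 - α j))) ^
        (1 / (1 - α₁)) := by
  have hsub : Icc t₀ t ⊆ I := hI.out ht₀ ht
  have habs : ∀ j, |∫ s in t₀..t, a j s| = ∫ s in t₀..t, a j s := fun j =>
    abs_of_nonneg (integral_nonneg hle fun s hs => ha j s (hsub hs))
  rw [abs_of_nonneg (integral_nonneg hle fun s hs => ha₀ s (hsub hs))]
  simp only [habs]
  exact le_exp_mul_of_hasDerivWithinAt_le hα hα₁ hle (ha₀c.mono hsub) (fun s hs => ha₀ s (hsub hs))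
    (fun j => (hac j).mono hsub) (fun j s hs => ha j s (hsub hs))
    (fun s hs => (hy s (hsub hs)).continuousAt.continuousWithinAt)
    (fun s hs => (hy s (hsub (Ico_subset_Icc_self hs))).hasDerivWithinAt)
    (fun s hs => hynn s (hsub hs)) (fun s hs => hbound s (hsub (Ico_subset_Icc_self hs)))

end NonlinearGronwall

/-- Indices `1..n` of the paper are modelled by `Fin n`, the distinguished index `1` being
`⟨0, hn⟩`. -/
theorem stmt_1_general (n : ℕ) (hn : 0 < n) (α : Fin n → ℝ)
    (hα1 : α ⟨0, hn⟩ < 1)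
    (hαlt : ∀ j, j ≠ ⟨0, hn⟩ → α j < α ⟨0, hn⟩)
    (I : Set ℝ) (hI : I.OrdConnected)
    (a₀ : ℝ → ℝ) (a : Fin n → ℝ → ℝ)
    (ha₀c : ContinuousOn a₀ I) (ha₀nn : ∀ t ∈ I, 0 ≤ a₀ t)
    (hac : ∀ j, ContinuousOn (a j) I) (hann : ∀ j, ∀ t ∈ I, 0 ≤ a j t)
    (y y' : ℝ → ℝ)
    (hy : ∀ t ∈ I, HasDerivAt y (y' t) t)
    (hynn : ∀ t ∈ I, 0 ≤ y t)
    (hbound : ∀ t ∈ I, |y' t| ≤ a₀ t * y t + ∑ j, a j t * y t ^ α j)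
    (t₀ : ℝ) (ht₀ : t₀ ∈ I) (y₀ : ℝ) (hy₀ : y t₀ = y₀) :
    ∀ t ∈ I,
      y t ≤ Real.exp (|∫ s in t₀..t, a₀ s|) *
        (y₀ ^ (1 - α ⟨0, hn⟩) +
          ∑ j, ((1 - α j) * |∫ s in t₀..t, a j s|) ^
            ((1 - α ⟨0, hn⟩) / (1 - α j))) ^ (1 / (1 - α ⟨0, hn⟩)) := by
  intro t ht
  subst hy₀
  have hα : ∀ j, α j ≤ α ⟨0, hn⟩ := fun j =>
    (eq_or_ne j ⟨0, hn⟩).elim (fun h => h ▸ le_rfl) fun h => (hαlt j h).le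
  rcases le_total t₀ t with hle | hle
  · exact NonlinearGronwall.le_of_hasDerivAt_le hα hα1 hI ha₀c ha₀nn hac hann hy hynn
      (fun s hs => (le_abs_self _).trans (hbound s hs)) ht₀ ht hle
  · have hrefl := NonlinearGronwall.le_of_hasDerivAt_le (I := Neg.neg ⁻¹' I)
      (y := fun s => y (-s)) (y' := fun s => -y' (-s)) (t₀ := -t₀) hα hα1
      (hI.preimage_anti fun _ _ => neg_le_neg)
      (ha₀c.comp continuous_neg.continuousOn fun _ h => h) (fun s hs => ha₀nn (-s) hs)
      (fun j => (hac j).comp continuous_neg.continuousOn fun _ h => h)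
      (fun j s hs => hann j (-s) hs)
      (fun s hs => ((hy (-s) hs).comp s (hasDerivAt_neg s)).congr_deriv (mul_neg_one _))
      (fun s hs => hynn (-s) hs) (fun s hs => (neg_le_abs _).trans (hbound (-s) hs))
      (by simpa using ht₀) (t := -t) (by simpa using ht) (neg_le_neg hle)
    simpa [integral_comp_neg, integral_symm t₀ t] using hrefl

/-- Lemma 2.3: a nonlinear Gronwall-type inequality. Indices `1..n` of the paper
are modelled by `Fin n`, with the distinguished index `1` modelled by `⟨0, hn⟩`. -/
theorem stmt_1 (n : ℕ) (hn : 0 < n) (α : Fin n → ℝ)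
    (hα0 : ∀ j, 0 ≤ α j) (hα1 : α ⟨0, hn⟩ < 1)
    (hαlt : ∀ j, j ≠ ⟨0, hn⟩ → α j < α ⟨0, hn⟩)
    (I : Set ℝ) (hI : I.OrdConnected)
    (a₀ : ℝ → ℝ) (a : Fin n → ℝ → ℝ)
    (ha₀c : ContinuousOn a₀ I) (ha₀nn : ∀ t ∈ I, 0 ≤ a₀ t)
    (hac : ∀ j, ContinuousOn (a j) I) (hann : ∀ j, ∀ t ∈ I, 0 ≤ a j t)
    (y y' : ℝ → ℝ)
    (hy : ∀ t ∈ I, HasDerivAt y (y' t) t)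
    (hynn : ∀ t ∈ I, 0 ≤ y t)
    (hbound : ∀ t ∈ I, |y' t| ≤ a₀ t * y t + ∑ j, a j t * y t ^ α j)
    (t₀ : ℝ) (ht₀ : t₀ ∈ I) (y₀ : ℝ) (hy₀ : y t₀ = y₀) :
    ∀ t ∈ I,
      y t ≤ Real.exp (|∫ s in t₀..t, a₀ s|) *
        (y₀ ^ (1 - α ⟨0, hn⟩) +
          ∑ j, ((1 - α j) * |∫ s in t₀..t, a j s|) ^
            ((1 - α ⟨0, hn⟩) / (1 - α j))) ^ (1 / (1 - α ⟨0, hn⟩)) :=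
  stmt_1_general n hn α hα1 hαlt I hI a₀ a ha₀c ha₀nn hac hann y y' hy hynn hbound t₀ ht₀ y₀ hy₀
end
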